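/- For each n ∈ ℕ, the k-algebra homomorphism Ψₙ from the (n+1)-fold tensor power F^{⊗(n+1)} (over k) to the k-algebra of all functions (Fin (n+1) → Φ) → K (pointwise operations), determined on simple tensors by Ψₙ(f₀ ⊗ ⋯ ⊗ fₙ)(i) = ∏_{j=0}^{n} i(j)(f_j), is injective, and its range is exactly the set of G-homogeneous functions, i.e. those h : (Fin (n+1) → Φ) → K with g(h(i)) = h(g ∘ i) for all g ∈ G and all tuples i. -/

import Mathlib

/-
The `n + 1`-tuples `i` give `|Φ|^(n+1) = dim_k F^{⊗(n+1)}` pairwise distinct characters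
`F^{⊗(n+1)} → K` (they differ on some `1 ⊗ ⋯ ⊗ f ⊗ ⋯ ⊗ 1`), hence are `K`-linearly independent by
Dedekind's lemma. Consequently the `K`-linear extension `K ⊗_k F^{⊗(n+1)} → ((Fin (n+1) → Φ) → K)`
of `Ψₙ` is surjective, hence bijective by a dimension count, and `Ψₙ` is injective.
It intertwines `g ⊗ 1` with the twisted action `h ↦ (i ↦ g (h (g⁻¹ ∘ i)))`, so a homogeneous `h`
comes from a `G`-invariant tensor, which by Galois descent lies in `1 ⊗ F^{⊗(n+1)}`.
-/

open scoped TensorProduct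

universe u

variable (k F K : Type u) [Field k] [CommRing F] [Algebra k F] [Field K] [Algebra k K]

/-- The evaluation map `Ψₙ : F^{⊗(n+1)} → ((Fin (n+1) → Φ) → K)` (with `Φ = (F →ₐ[k] K)`),
determined on simple tensors by `Ψₙ(f₀ ⊗ ⋯ ⊗ fₙ)(i) = ∏_j i(j)(f_j)`. -/
noncomputable def Psi (n : ℕ) :
    (⨂[k] (_ : Fin (n + 1)), F) →ₗ[k] ((Fin (n + 1) → (F →ₐ[k] K)) → K) :=
  LinearMap.pi fun i =>
    PiTensorProduct.lift
      ((MultilinearMap.mkPiAlgebra k (Fin (n + 1)) K).compLinearMap fun j => (i j).toLinearMap)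

theorem Submodule.span_range_eval_eq_top_of_linearIndependent {ι V K : Type*} [Field K]
    [Finite ι] {χ : ι → V → K} (hχ : LinearIndependent K χ) :
    Submodule.span K (Set.range fun v i => χ i v) = ⊤ := by
  classical
  cases nonempty_fintype ι
  -- a nonzero functional vanishing on the span has coefficients giving a relation among the `χ i`
  by_contra hne
  obtain ⟨f, hf0, hf⟩ :=
    Submodule.exists_dual_map_eq_bot_of_lt_top (lt_top_iff_ne_top.2 hne) inferInstance
  set c : ι → K := fun i => f fun j => if i = j then 1 else 0
  have hrel : ∑ i, c i • χ i = 0 := by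
    ext v
    have hv : f (fun i => χ i v) ∈ (⊥ : Submodule K K) :=
      hf ▸ Submodule.mem_map_of_mem (Submodule.subset_span ⟨v, rfl⟩)
    rw [Submodule.mem_bot, LinearMap.pi_apply_eq_sum_univ] at hv
    simpa [mul_comm] using hv
  have hc : ∀ i, c i = 0 := Fintype.linearIndependent_iff.1 hχ c hrel
  simp only [c] at hc
  exact hf0 (LinearMap.ext fun x => by simp [LinearMap.pi_apply_eq_sum_univ f x, hc])

theorem Module.finrank_piTensorProduct {ι R : Type*} [Fintype ι] [Field R] {M : ι → Type*}
    [∀ i, AddCommGroup (M i)] [∀ i, Module R (M i)] [∀ i, FiniteDimensional R (M i)] :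
    Module.finrank R (⨂[R] i, M i) = ∏ i, Module.finrank R (M i) := by
  classical
  rw [Module.finrank_eq_card_basis (Basis.piTensorProduct fun i => Module.finBasis R (M i))]
  simp

section BaseChange

variable {k K V : Type*} [Field k] [Field K] [Algebra k K] [AddCommGroup V] [Module k V]

theorem Module.Basis.baseChange_repr_rTensor {ι : Type*} (b : Module.Basis ι k V)
    (g : K ≃ₐ[k] K) (z : K ⊗[k] V) (i : ι) :
    (b.baseChange K).repr (LinearMap.rTensor V g.toLinearMap z) i =
      g ((b.baseChange K).repr z i) := by
  induction z using TensorProduct.induction_on with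
  | zero => simp
  | tmul x v => simp
  | add y z hy hz => simp [hy, hz]

theorem TensorProduct.exists_one_tmul_eq_of_forall_rTensor_eq [IsGalois k K] (z : K ⊗[k] V)
    (hz : ∀ g : K ≃ₐ[k] K, LinearMap.rTensor V g.toLinearMap z = z) :
    ∃ v : V, (1 : K) ⊗ₜ[k] v = z := by
  let b := Module.Free.chooseBasis k V
  have hfixed (i) : (b.baseChange K).repr z i ∈ Set.range (algebraMap k K) :=
    (InfiniteGalois.mem_range_algebraMap_iff_fixed _).2 fun g => by
      rw [← b.baseChange_repr_rTensor, hz]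
  choose a ha using hfixed
  refine ⟨∑ i ∈ ((b.baseChange K).repr z).support, a i • b i, ?_⟩
  conv_rhs => rw [← (b.baseChange K).linearCombination_repr z, Finsupp.linearCombination_apply]
  rw [TensorProduct.tmul_sum, Finsupp.sum]
  refine Finset.sum_congr rfl fun i _ => ?_
  rw [← ha, Module.Basis.baseChange_apply, algebraMap_smul, TensorProduct.tmul_smul]

theorem LinearMap.bijective_liftBaseChange_of_span_range_eq_top {M : Type*} [AddCommGroup M]
    [Module K M] [Module k M] [IsScalarTower k K M] [FiniteDimensional k V]
    [FiniteDimensional K M] (l : V →ₗ[k] M) (hspan : Submodule.span K (Set.range l) = ⊤)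
    (hdim : Module.finrank k V = Module.finrank K M) :
    Function.Bijective (l.liftBaseChange K) := by
  have hsurj : Function.Surjective (l.liftBaseChange K) := by
    rw [← LinearMap.range_eq_top, LinearMap.range_liftBaseChange, LinearMap.coe_range, hspan]
  refine ⟨?_, hsurj⟩
  rwa [LinearMap.injective_iff_surjective_of_finrank_eq_finrank]
  rw [Module.finrank_baseChange, hdim]

end BaseChange

namespace Psi

variable {k F K} {n : ℕ}

theorem tprod_apply (f : Fin (n + 1) → F) (i : Fin (n + 1) → (F →ₐ[k] K)) :
    Psi k F K n (PiTensorProduct.tprod k f) i = ∏ j, i j (f j) := by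
  simp [Psi]

noncomputable def evalAlgHom (i : Fin (n + 1) → (F →ₐ[k] K)) :
    (⨂[k] (_ : Fin (n + 1)), F) →ₐ[k] K :=
  PiTensorProduct.liftAlgHom
    ((MultilinearMap.mkPiAlgebra k (Fin (n + 1)) K).compLinearMap fun j => (i j).toLinearMap)
    (by simp) (fun x y => by simp [Finset.prod_mul_distrib])

theorem evalAlgHom_apply (i : Fin (n + 1) → (F →ₐ[k] K)) (t : ⨂[k] (_ : Fin (n + 1)), F) :
    evalAlgHom i t = Psi k F K n t i := rfl

theorem evalAlgHom_comp_singleAlgHom (i : Fin (n + 1) → (F →ₐ[k] K)) (j : Fin (n + 1)) :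
    (evalAlgHom i).comp (PiTensorProduct.singleAlgHom j) = i j := by
  ext f
  simp [evalAlgHom_apply, tprod_apply, Pi.mulSingle_apply, apply_ite]

theorem evalAlgHom_injective :
    Function.Injective (evalAlgHom : (Fin (n + 1) → (F →ₐ[k] K)) → _) := fun i i' h =>
  funext fun j => by
    simpa only [evalAlgHom_comp_singleAlgHom] using
      congrArg (fun χ => χ.comp (PiTensorProduct.singleAlgHom j)) h

theorem comp_evalAlgHom (g : K →ₐ[k] K) (i : Fin (n + 1) → (F →ₐ[k] K)) :
    g.comp (evalAlgHom i) = evalAlgHom fun m => g.comp (i m) := by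
  ext j : 1
  rw [AlgHom.comp_assoc, evalAlgHom_comp_singleAlgHom, evalAlgHom_comp_singleAlgHom]

theorem algHom_apply (g : K →ₐ[k] K) (t : ⨂[k] (_ : Fin (n + 1)), F)
    (i : Fin (n + 1) → (F →ₐ[k] K)) :
    g (Psi k F K n t i) = Psi k F K n t fun m => g.comp (i m) := by
  rw [← evalAlgHom_apply, ← evalAlgHom_apply, ← comp_evalAlgHom, AlgHom.comp_apply]

theorem linearIndependent_evalAlgHom :
    LinearIndependent K fun i : Fin (n + 1) → (F →ₐ[k] K) => ⇑(evalAlgHom i) :=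
  (linearIndependent_monoidHom (⨂[k] (_ : Fin (n + 1)), F) K).comp
    (fun i => (evalAlgHom i).toMonoidHom)
    fun _ _ h => evalAlgHom_injective (AlgHom.ext fun x => DFunLike.congr_fun h x)

theorem span_range_eq_top [FiniteDimensional k F] :
    Submodule.span K (Set.range (Psi k F K n)) = ⊤ :=
  Submodule.span_range_eval_eq_top_of_linearIndependent linearIndependent_evalAlgHom

theorem liftBaseChange_rTensor (g : K ≃ₐ[k] K) (z : K ⊗[k] (⨂[k] (_ : Fin (n + 1)), F))
    (i : Fin (n + 1) → (F →ₐ[k] K)) :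
    (Psi k F K n).liftBaseChange K (LinearMap.rTensor _ g.toLinearMap z)
      (fun m => g.toAlgHom.comp (i m)) = g ((Psi k F K n).liftBaseChange K z i) := by
  induction z using TensorProduct.induction_on with
  | zero => simp
  | tmul x t =>
    rw [LinearMap.rTensor_tmul, LinearMap.liftBaseChange_tmul, LinearMap.liftBaseChange_tmul]
    simp [← algHom_apply]
  | add y z hy hz => simp [hy, hz]

end Psi

theorem psi_injective_range_homogeneous [IsGalois k K]
    [FiniteDimensional k F]
    (hcard : Nat.card (F →ₐ[k] K) = Module.finrank k F) (n : ℕ) :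
    (∀ (f : Fin (n + 1) → F) (i : Fin (n + 1) → (F →ₐ[k] K)),
      Psi k F K n (PiTensorProduct.tprod k f) i = ∏ j : Fin (n + 1), (i j) (f j)) ∧
    Function.Injective (Psi k F K n) ∧
    Set.range (Psi k F K n) =
      {h : (Fin (n + 1) → (F →ₐ[k] K)) → K |
        ∀ (g : K ≃ₐ[k] K) (i : Fin (n + 1) → (F →ₐ[k] K)),
          g (h i) = h (fun m => (g.toAlgHom).comp (i m))} := by
  have hdim : Module.finrank k (⨂[k] (_ : Fin (n + 1)), F) =
      Module.finrank K ((Fin (n + 1) → (F →ₐ[k] K)) → K) := by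
    rw [Module.finrank_piTensorProduct, Module.finrank_pi, Fintype.card_fun, Fintype.card_fin,
      ← Nat.card_eq_fintype_card, hcard, Finset.prod_const, Finset.card_univ, Fintype.card_fin]
  obtain ⟨hinj, hsurj⟩ :=
    (Psi k F K n).bijective_liftBaseChange_of_span_range_eq_top Psi.span_range_eq_top hdim
  have hPsi_inj : Function.Injective (Psi k F K n) := by
    simpa [Function.comp_def] using hinj.comp (Module.Flat.tensorProduct_mk_injective k _ K)
  refine ⟨Psi.tprod_apply, hPsi_inj, ?_⟩
  ext h
  refine ⟨fun ⟨t, ht⟩ g i => ht ▸ Psi.algHom_apply g t i, fun hh => ?_⟩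
  obtain ⟨z, rfl⟩ := hsurj h
  have hfix (g : K ≃ₐ[k] K) : LinearMap.rTensor _ g.toLinearMap z = z := by
    refine hinj (funext fun i => ?_)
    obtain ⟨i, rfl⟩ : ∃ i', (fun m => g.toAlgHom.comp (i' m)) = i :=
      ⟨fun m => g.symm.toAlgHom.comp (i m), by ext; simp⟩
    rw [Psi.liftBaseChange_rTensor, hh]
  obtain ⟨t, rfl⟩ := TensorProduct.exists_one_tmul_eq_of_forall_rTensor_eq z hfix
  exact ⟨t, (LinearMap.liftBaseChange_one_tmul _ _ _).symm⟩
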